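/- arXiv:2103.15882 — 3 statements merged into one kernel-verified Lean document; each statement's English description precedes it below -/
import Mathlib

section
/- Let N ≥ 1, M ≥ 1, L ≥ 0 be integers with L < 2M, let τ₀ > 0, C > 0 and κ₀ ≠ 0, and let a : [τ₀,∞) → (2×2 real matrices) satisfy |tr a(τ)| ≤ C τ^{−M/N} and |det a(τ) + κ₀ τ^{−L/N}| ≤ C τ^{−(L+1)/N} for all τ ≥ τ₀. Then: (i) if κ₀ > 0, there exists τ_* ≥ τ₀ such that for every τ ≥ τ_* the characteristic polynomial of a(τ) has two distinct real roots e₋(τ) < 0 < e₊(τ), and τ^{L/(2N)} e₊(τ) → √κ₀ and τ^{L/(2N)} e₋(τ) → −√κ₀ as τ → ∞; (ii) if κ₀ < 0, there exists τ_* ≥ τ₀ such that for every τ ≥ τ_* the eigenvalues of a(τ) form a pair of non-real complex conjugate numbers e_±(τ) with Re e_±(τ) = tr a(τ)/2 (hence |Re e_±(τ)| ≤ (C/2) τ^{−M/N}) and τ^{L/(2N)} |Im e_±(τ)| → √(−κ₀) as τ → ∞. -/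
/-!
The eigenvalues of `a(τ)` are the roots `(tr ± √Δ)/2` of `x² - tr·x + det`, with
`Δ = tr² - 4 det`. Rescale by `s(τ) = τ^{L/(2N)}`: since `L < 2M`, `s·tr → 0`, and `s²·det → -κ₀`,
so `(s/2)²·Δ → κ₀`. Hence `Δ` eventually has the sign of `κ₀`, and `s·(tr ± √Δ)/2 → ±√κ₀` when
`κ₀ > 0`, while `s·√(-Δ)/2 → √(-κ₀)` when `κ₀ < 0`.
-/

open Real Filter Topology

section Quadratic

lemma monic_quadratic_eq_zero_iff {t d : ℝ} (hΔ : 0 ≤ discrim 1 (-t) d) (x : ℝ) :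
    x ^ 2 - t * x + d = 0 ↔
      x = (t + √(discrim 1 (-t) d)) / 2 ∨ x = (t - √(discrim 1 (-t) d)) / 2 := by
  have h := quadratic_eq_zero_iff one_ne_zero (mul_self_sqrt hΔ).symm x
  rw [neg_neg, mul_one] at h
  rw [← h]
  ring_nf

lemma discrim_pos_of_neg {t d : ℝ} (hd : d < 0) : 0 < discrim 1 (-t) d := by
  rw [discrim]
  nlinarith [sq_nonneg t]

lemma sub_sqrt_discrim_neg_and_add_pos {t d : ℝ} (hd : d < 0) :
    (t - √(discrim 1 (-t) d)) / 2 < 0 ∧ 0 < (t + √(discrim 1 (-t) d)) / 2 := by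
  have h : |t| < √(discrim 1 (-t) d) := by
    rw [lt_sqrt (abs_nonneg t), sq_abs, discrim]
    linarith
  obtain ⟨h₁, h₂⟩ := abs_lt.mp h
  constructor <;> linarith

lemma Complex.monic_quadratic_eq_zero {t d : ℝ} (hΔ : discrim 1 (-t) d ≤ 0) :
    (⟨t / 2, √(-discrim 1 (-t) d) / 2⟩ : ℂ) ^ 2 - t * ⟨t / 2, √(-discrim 1 (-t) d) / 2⟩ + d
      = 0 := by
  set u := √(-discrim 1 (-t) d)
  have hu : u ^ 2 = -discrim 1 (-t) d := sq_sqrt (neg_nonneg.mpr hΔ)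
  rw [discrim] at hu
  apply Complex.ext <;> simp [sq]
  · linear_combination (-1 / 4 : ℝ) * hu
  · ring

end Quadratic

section Asymptotics

variable {α : Type*} {l : Filter α} {s t d : α → ℝ} {κ : ℝ}

lemma eventually_neg_of_tendsto_sq_mul {g : α → ℝ} {c : ℝ} (hc : c < 0)
    (h : Tendsto (fun x => s x ^ 2 * g x) l (𝓝 c)) : ∀ᶠ x in l, g x < 0 :=
  (h.eventually_lt_const hc).mono fun _ hx => neg_of_mul_neg_right hx (sq_nonneg _)

lemma tendsto_mul_sqrt_of_tendsto_sq_mul {g : α → ℝ} {c : ℝ} (hs : ∀ᶠ x in l, 0 ≤ s x)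
    (h : Tendsto (fun x => s x ^ 2 * g x) l (𝓝 c)) :
    Tendsto (fun x => s x * √(g x)) l (𝓝 √c) := by
  refine ((continuous_sqrt.tendsto c).comp h).congr' ?_
  filter_upwards [hs] with x hx
  simp only [Function.comp, sqrt_mul (sq_nonneg _), sqrt_sq hx]

lemma tendsto_half_sq_mul_discrim (ht : Tendsto (fun x => s x * t x) l (𝓝 0))
    (hd : Tendsto (fun x => s x ^ 2 * d x) l (𝓝 (-κ))) :
    Tendsto (fun x => (s x / 2) ^ 2 * discrim 1 (-t x) (d x)) l (𝓝 κ) := by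
  have h := ((ht.pow 2).div_const 4).sub hd
  rw [zero_pow two_ne_zero, zero_div, zero_sub, neg_neg] at h
  exact h.congr fun x => by rw [discrim]; ring

lemma tendsto_mul_add_sqrt_discrim (hs : ∀ᶠ x in l, 0 ≤ s x)
    (ht : Tendsto (fun x => s x * t x) l (𝓝 0)) (hd : Tendsto (fun x => s x ^ 2 * d x) l (𝓝 (-κ))) :
    Tendsto (fun x => s x * ((t x + √(discrim 1 (-t x) (d x))) / 2)) l (𝓝 √κ) := by
  have h := (ht.div_const 2).add <| tendsto_mul_sqrt_of_tendsto_sq_mul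
    (hs.mono fun _ hx => div_nonneg hx zero_le_two) (tendsto_half_sq_mul_discrim ht hd)
  rw [zero_div, zero_add] at h
  exact h.congr fun x => by ring

lemma tendsto_mul_sub_sqrt_discrim (hs : ∀ᶠ x in l, 0 ≤ s x)
    (ht : Tendsto (fun x => s x * t x) l (𝓝 0)) (hd : Tendsto (fun x => s x ^ 2 * d x) l (𝓝 (-κ))) :
    Tendsto (fun x => s x * ((t x - √(discrim 1 (-t x) (d x))) / 2)) l (𝓝 (-√κ)) := by
  have h := (ht.div_const 2).sub <| tendsto_mul_sqrt_of_tendsto_sq_mul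
    (hs.mono fun _ hx => div_nonneg hx zero_le_two) (tendsto_half_sq_mul_discrim ht hd)
  rw [zero_div, zero_sub] at h
  exact h.congr fun x => by ring

lemma tendsto_mul_sqrt_neg_discrim (hs : ∀ᶠ x in l, 0 ≤ s x)
    (ht : Tendsto (fun x => s x * t x) l (𝓝 0)) (hd : Tendsto (fun x => s x ^ 2 * d x) l (𝓝 (-κ))) :
    Tendsto (fun x => s x * (√(-discrim 1 (-t x) (d x)) / 2)) l (𝓝 √(-κ)) := by
  have h := tendsto_mul_sqrt_of_tendsto_sq_mul (hs.mono fun _ hx => div_nonneg hx zero_le_two)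
    ((tendsto_half_sq_mul_discrim ht hd).neg.congr fun x => (mul_neg _ _).symm)
  exact h.congr fun x => by ring

end Asymptotics

section PowerBounds

lemma tendsto_rpow_mul_of_abs_le_rpow {f : ℝ → ℝ} {c p q : ℝ} (hpq : p + q < 0)
    (hf : ∀ᶠ τ in atTop, |f τ| ≤ c * τ ^ q) :
    Tendsto (fun τ => τ ^ p * f τ) atTop (𝓝 0) := by
  have hlim : Tendsto (fun τ : ℝ => c * τ ^ (p + q)) atTop (𝓝 0) := by
    simpa using (tendsto_rpow_neg_atTop (neg_pos.mpr hpq)).const_mul c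
  refine squeeze_zero_norm' ?_ hlim
  filter_upwards [hf, eventually_gt_atTop 0] with τ hfτ hτ
  rw [norm_eq_abs, abs_mul, abs_of_pos (rpow_pos_of_pos hτ p), rpow_add hτ]
  calc τ ^ p * |f τ| ≤ τ ^ p * (c * τ ^ q) := mul_le_mul_of_nonneg_left hfτ (rpow_nonneg hτ.le p)
    _ = c * (τ ^ p * τ ^ q) := by ring

lemma tendsto_rpow_mul_of_abs_add_le_rpow {f : ℝ → ℝ} {c κ p q r : ℝ} (hpq : p + q = 0)
    (hpr : p + r < 0) (hf : ∀ᶠ τ in atTop, |f τ + κ * τ ^ q| ≤ c * τ ^ r) :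
    Tendsto (fun τ => τ ^ p * f τ) atTop (𝓝 (-κ)) := by
  have h := (tendsto_rpow_mul_of_abs_le_rpow hpr hf).sub_const κ
  rw [zero_sub] at h
  refine h.congr' ?_
  filter_upwards [eventually_gt_atTop 0] with τ hτ
  rw [mul_add, mul_left_comm, ← rpow_add hτ, hpq, rpow_zero, mul_one, add_sub_cancel_right]

end PowerBounds

theorem statement5_general (N M L : ℕ) (hN : 1 ≤ N) (hL : L < 2 * M)
    (τ₀ C κ₀ : ℝ)
    (a : ℝ → Matrix (Fin 2) (Fin 2) ℝ)
    (htr : ∀ τ ≥ τ₀, |Matrix.trace (a τ)| ≤ C * τ ^ (-(M : ℝ) / (N : ℝ)))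
    (hdet : ∀ τ ≥ τ₀, |(a τ).det + κ₀ * τ ^ (-(L : ℝ) / (N : ℝ))| ≤
      C * τ ^ (-((L : ℝ) + 1) / (N : ℝ))) :
    (0 < κ₀ → ∃ τs ≥ τ₀, ∃ em ep : ℝ → ℝ,
      (∀ τ ≥ τs,
        em τ < 0 ∧ 0 < ep τ ∧
        (em τ) ^ 2 - Matrix.trace (a τ) * em τ + (a τ).det = 0 ∧
        (ep τ) ^ 2 - Matrix.trace (a τ) * ep τ + (a τ).det = 0 ∧
        (∀ x : ℝ, x ^ 2 - Matrix.trace (a τ) * x + (a τ).det = 0 → x = em τ ∨ x = ep τ)) ∧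
      Filter.Tendsto (fun τ => τ ^ ((L : ℝ) / (2 * (N : ℝ))) * ep τ)
        Filter.atTop (nhds (Real.sqrt κ₀)) ∧
      Filter.Tendsto (fun τ => τ ^ ((L : ℝ) / (2 * (N : ℝ))) * em τ)
        Filter.atTop (nhds (-Real.sqrt κ₀))) ∧
    (κ₀ < 0 → ∃ τs ≥ τ₀, ∃ e : ℝ → ℂ,
      (∀ τ ≥ τs,
        (e τ) ^ 2 - (↑(Matrix.trace (a τ)) : ℂ) * e τ + (↑((a τ).det) : ℂ) = 0 ∧
        (e τ).im ≠ 0 ∧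
        (e τ).re = Matrix.trace (a τ) / 2 ∧
        |(e τ).re| ≤ (C / 2) * τ ^ (-(M : ℝ) / (N : ℝ))) ∧
      Filter.Tendsto (fun τ => τ ^ ((L : ℝ) / (2 * (N : ℝ))) * |(e τ).im|)
        Filter.atTop (nhds (Real.sqrt (-κ₀)))) := by
  have hN₀ : (0 : ℝ) < N := by exact_mod_cast hN
  have hL₀ : (L : ℝ) < 2 * M := by exact_mod_cast hL
  have hs : ∀ᶠ τ : ℝ in atTop, 0 ≤ τ ^ ((L : ℝ) / (2 * N)) :=
    (eventually_ge_atTop 0).mono fun τ hτ => rpow_nonneg hτ _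
  have htr' : Tendsto (fun τ => τ ^ ((L : ℝ) / (2 * N)) * (a τ).trace) atTop (𝓝 0) := by
    refine tendsto_rpow_mul_of_abs_le_rpow ?_ ((eventually_ge_atTop τ₀).mono htr)
    rw [show (L : ℝ) / (2 * N) + -M / N = (L - 2 * M) / (2 * N) by field_simp; ring]
    exact div_neg_of_neg_of_pos (by linarith) (by positivity)
  have hdet' : Tendsto (fun τ => (τ ^ ((L : ℝ) / (2 * N))) ^ 2 * (a τ).det) atTop (𝓝 (-κ₀)) := by
    refine (tendsto_rpow_mul_of_abs_add_le_rpow (p := L / N) (by ring) ?_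
      ((eventually_ge_atTop τ₀).mono hdet)).congr' ?_
    · linarith [show (L : ℝ) / N + -(L + 1) / N = -(1 / N) by ring, one_div_pos.mpr hN₀]
    · filter_upwards [eventually_ge_atTop 0] with τ hτ
      rw [← rpow_mul_natCast hτ,
        show (L : ℝ) / (2 * N) * ((2 : ℕ) : ℝ) = L / N by push_cast; field_simp]
  have exists_forall_ge {p : ℝ → Prop} (h : ∀ᶠ τ in atTop, p τ) : ∃ τs ≥ τ₀, ∀ τ ≥ τs, p τ :=
    frequently_atTop.mp (eventually_forall_ge_atTop.mpr h).frequently τ₀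
  refine ⟨fun hκ₀ => ?_, fun hκ₀ => ?_⟩
  · obtain ⟨τs, hτs, hd⟩ :=
      exists_forall_ge (eventually_neg_of_tendsto_sq_mul (neg_neg_of_pos hκ₀) hdet')
    refine ⟨τs, hτs, fun τ => ((a τ).trace - √(discrim 1 (-(a τ).trace) (a τ).det)) / 2,
      fun τ => ((a τ).trace + √(discrim 1 (-(a τ).trace) (a τ).det)) / 2, fun τ hτ => ?_,
      tendsto_mul_add_sqrt_discrim hs htr' hdet', tendsto_mul_sub_sqrt_discrim hs htr' hdet'⟩
    obtain ⟨hem, hep⟩ := sub_sqrt_discrim_neg_and_add_pos (t := (a τ).trace) (hd τ hτ)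
    have hroot := monic_quadratic_eq_zero_iff (discrim_pos_of_neg (t := (a τ).trace) (hd τ hτ)).le
    exact ⟨hem, hep, (hroot _).mpr (Or.inr rfl), (hroot _).mpr (Or.inl rfl),
      fun x hx => ((hroot x).mp hx).symm⟩
  · obtain ⟨τs, hτs, hΔ⟩ := exists_forall_ge
      (eventually_neg_of_tendsto_sq_mul hκ₀ (tendsto_half_sq_mul_discrim htr' hdet'))
    refine ⟨τs, hτs, fun τ => ⟨(a τ).trace / 2, √(-discrim 1 (-(a τ).trace) (a τ).det) / 2⟩,
      fun τ hτ => ⟨Complex.monic_quadratic_eq_zero (hΔ τ hτ).le, ?_, rfl, ?_⟩, ?_⟩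
    · exact div_ne_zero (sqrt_pos.mpr (neg_pos.mpr (hΔ τ hτ))).ne' two_ne_zero
    · rw [abs_div, abs_two]
      linarith [htr τ (hτs.trans hτ)]
    · refine (tendsto_mul_sqrt_neg_discrim hs htr' hdet').congr fun τ => ?_
      rw [abs_of_nonneg (div_nonneg (sqrt_nonneg _) zero_le_two)]

/-- Asymptotic eigenvalue analysis of the linearization matrix `a(τ)` with
`tr a(τ) = O(τ^{−M/N})` and `det a(τ) = −κ₀ τ^{−L/N} + O(τ^{−(L+1)/N})`.
(Recall that the characteristic polynomial of a `2×2` matrix is `x² − tr·x + det`.)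
(i) If `κ₀ > 0`, eventually the characteristic polynomial has exactly two distinct real
roots `e₋(τ) < 0 < e₊(τ)` with `τ^{L/(2N)} e₊(τ) → √κ₀`, `τ^{L/(2N)} e₋(τ) → −√κ₀`.
(ii) If `κ₀ < 0`, eventually the eigenvalues form a non-real complex conjugate pair `e±(τ)`
with `Re e±(τ) = tr a(τ)/2` (hence `|Re e±(τ)| ≤ (C/2) τ^{−M/N}`) and
`τ^{L/(2N)} |Im e±(τ)| → √(−κ₀)`. -/
theorem statement5 (N M L : ℕ) (hN : 1 ≤ N) (hM : 1 ≤ M) (hL : L < 2 * M)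
    (τ₀ C κ₀ : ℝ) (hτ₀ : 0 < τ₀) (hC : 0 < C) (hκ₀ : κ₀ ≠ 0)
    (a : ℝ → Matrix (Fin 2) (Fin 2) ℝ)
    (htr : ∀ τ ≥ τ₀, |Matrix.trace (a τ)| ≤ C * τ ^ (-(M : ℝ) / (N : ℝ)))
    (hdet : ∀ τ ≥ τ₀, |(a τ).det + κ₀ * τ ^ (-(L : ℝ) / (N : ℝ))| ≤
      C * τ ^ (-((L : ℝ) + 1) / (N : ℝ))) :
    (0 < κ₀ → ∃ τs ≥ τ₀, ∃ em ep : ℝ → ℝ,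
      (∀ τ ≥ τs,
        em τ < 0 ∧ 0 < ep τ ∧
        (em τ) ^ 2 - Matrix.trace (a τ) * em τ + (a τ).det = 0 ∧
        (ep τ) ^ 2 - Matrix.trace (a τ) * ep τ + (a τ).det = 0 ∧
        (∀ x : ℝ, x ^ 2 - Matrix.trace (a τ) * x + (a τ).det = 0 → x = em τ ∨ x = ep τ)) ∧
      Filter.Tendsto (fun τ => τ ^ ((L : ℝ) / (2 * (N : ℝ))) * ep τ)
        Filter.atTop (nhds (Real.sqrt κ₀)) ∧
      Filter.Tendsto (fun τ => τ ^ ((L : ℝ) / (2 * (N : ℝ))) * em τ)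
        Filter.atTop (nhds (-Real.sqrt κ₀))) ∧
    (κ₀ < 0 → ∃ τs ≥ τ₀, ∃ e : ℝ → ℂ,
      (∀ τ ≥ τs,
        (e τ) ^ 2 - (↑(Matrix.trace (a τ)) : ℂ) * e τ + (↑((a τ).det) : ℂ) = 0 ∧
        (e τ).im ≠ 0 ∧
        (e τ).re = Matrix.trace (a τ) / 2 ∧
        |(e τ).re| ≤ (C / 2) * τ ^ (-(M : ℝ) / (N : ℝ))) ∧
      Filter.Tendsto (fun τ => τ ^ ((L : ℝ) / (2 * (N : ℝ))) * |(e τ).im|)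
        Filter.atTop (nhds (Real.sqrt (-κ₀)))) :=
  statement5_general N M L hN hL τ₀ C κ₀ a htr hdet
end

section
/- Let N, M, L, n be integers with N ≥ 1, M ≥ 1, 0 ≤ L ≤ N − M and n ≥ L. For each L ≤ K ≤ n let Λ_K : ℝ² → ℝ be continuous and 2π-periodic in its second argument, and for each 0 ≤ K ≤ n let Ω_K : ℝ² → ℝ be continuous and 2π-periodic in its second argument. Assume Λ_L(ρ,φ) ≠ 0 for all (ρ,φ) ∈ ℝ². Then every solution (ρ(τ), φ(τ)) defined on a half-line [τ₁,∞), τ₁ > 0, of the system dρ/dτ = Σ_{K=L}^{n} τ^{−(M+K)/N} Λ_K(ρ,φ), dφ/dτ = Σ_{K=0}^{n} τ^{−(M+K)/N} Ω_K(ρ,φ) exits every bounded set in finite time: for every bounded set D ⊂ ℝ² there exists τ₂ ≥ τ₁ with (ρ(τ₂), φ(τ₂)) ∉ D. -/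
open Real Filter Topology Metric

/-!
If the trajectory stayed in a bounded set `D`, it would stay in a compact ball, on which the
nonvanishing (hence, by connectedness of the plane, sign-definite) coefficient `Λ_L` is bounded
away from zero. Since `M + L ≤ N`, the leading term `τ^{-(M+L)/N} Λ_L` of `dρ/dτ` is then at
least of order `1/τ`, while every other term is smaller by a factor `τ^{-1/N} → 0`. Hence
`± ρ` grows at least like a multiple of `log τ`, which contradicts boundedness.
-/

theorem Continuous.exists_abs_eq_one_mul_pos {X : Type*} [TopologicalSpace X] [PreconnectedSpace X]
    {f : X → ℝ} (hf : Continuous f) (h0 : ∀ x, f x ≠ 0) :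
    ∃ ε : ℝ, |ε| = 1 ∧ ∀ x, 0 < ε * f x := by
  by_cases hpos : ∀ x, 0 < f x
  · exact ⟨1, abs_one, by simpa using hpos⟩
  push Not at hpos
  obtain ⟨a, ha⟩ := hpos
  refine ⟨-1, by simp, fun b => ?_⟩
  by_contra! hb
  have hab : (0 : ℝ) ∈ Set.Icc (f a) (f b) := ⟨ha, by linarith⟩
  obtain ⟨x, hx⟩ := intermediate_value_univ a b hf hab
  exact h0 x hx

theorem tendsto_atTop_of_mul_inv_le_deriv {f f' : ℝ → ℝ} {T c : ℝ} (hT : 0 < T) (hc : 0 < c)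
    (hf : ∀ t ≥ T, HasDerivAt f (f' t) t) (hf' : ∀ t ≥ T, c * t⁻¹ ≤ f' t) :
    Tendsto f atTop atTop := by
  set g : ℝ → ℝ := fun t => f t - c * log t
  have hg : ∀ t ≥ T, HasDerivAt g (f' t - c * t⁻¹) t := fun t ht =>
    (hf t ht).sub ((hasDerivAt_log (hT.trans_le ht).ne').const_mul c)
  have hmono : MonotoneOn g (Set.Ici T) := by
    refine monotoneOn_of_deriv_nonneg (convex_Ici T)
      (fun t ht => (hg t ht).continuousAt.continuousWithinAt) (fun t ht => ?_) (fun t ht => ?_)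
    all_goals rw [interior_Ici] at ht
    · exact (hg t ht.le).differentiableAt.differentiableWithinAt
    · rw [(hg t ht.le).deriv, sub_nonneg]
      exact hf' t ht.le
  have hlower : ∀ᶠ t in atTop, g T + c * log t ≤ f t := by
    filter_upwards [eventually_ge_atTop T] with t ht
    have := hmono Set.self_mem_Ici ht ht
    simp only [g] at this ⊢
    linarith
  exact tendsto_atTop_mono' _ hlower
    (tendsto_atTop_add_const_left _ _ (tendsto_log_atTop.const_mul_atTop hc))

section DominantTerm

variable {N M L n : ℕ} {τ : ℝ}

theorem rpow_neg_add_div_le_of_lt (hN : 0 < N) (hτ : 1 ≤ τ) {K : ℕ} (hK : L < K) :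
    τ ^ (-(((M : ℝ) + K) / N)) ≤ τ ^ (-(((M : ℝ) + L) / N)) * τ ^ (-(1 / (N : ℝ))) := by
  rw [← rpow_add (by linarith)]
  apply rpow_le_rpow_of_exponent_le hτ
  have hK' : (L : ℝ) + 1 ≤ K := by exact_mod_cast hK
  have hN' : (0 : ℝ) < N := by exact_mod_cast hN
  rw [← neg_add, ← add_div]
  exact neg_le_neg (div_le_div_of_nonneg_right (by linarith) hN'.le)

theorem rpow_mul_sub_le_sum_rpow_mul (hN : 0 < N) (hn : L ≤ n) (hτ : 1 ≤ τ) (x : ℕ → ℝ) :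
    τ ^ (-(((M : ℝ) + L) / N)) * (x L - τ ^ (-(1 / (N : ℝ))) * ∑ K ∈ Finset.Icc L n, |x K|) ≤
      ∑ K ∈ Finset.Icc L n, τ ^ (-(((M : ℝ) + K) / N)) * x K := by
  set a := τ ^ (-(((M : ℝ) + L) / N))
  set b := τ ^ (-(1 / (N : ℝ)))
  have hab : 0 ≤ a * b := by positivity
  have hterm : ∀ K ∈ (Finset.Icc L n).erase L,
      -(a * b * |x K|) ≤ τ ^ (-(((M : ℝ) + K) / N)) * x K := by
    intro K hK
    have hLK : L < K := lt_of_le_of_ne (Finset.mem_Icc.mp (Finset.mem_of_mem_erase hK)).1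
      (Finset.ne_of_mem_erase hK).symm
    have hpow := rpow_neg_add_div_le_of_lt (M := M) hN hτ hLK
    have hpow0 : 0 ≤ τ ^ (-(((M : ℝ) + K) / N)) := by positivity
    calc -(a * b * |x K|) ≤ -(τ ^ (-(((M : ℝ) + K) / N)) * |x K|) :=
          neg_le_neg (mul_le_mul_of_nonneg_right hpow (abs_nonneg _))
      _ ≤ τ ^ (-(((M : ℝ) + K) / N)) * x K := by
          rw [← mul_neg]
          exact mul_le_mul_of_nonneg_left (neg_abs_le _) hpow0
  have hrest : ∑ K ∈ (Finset.Icc L n).erase L, |x K| ≤ ∑ K ∈ Finset.Icc L n, |x K| :=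
    Finset.sum_le_sum_of_subset_of_nonneg (Finset.erase_subset _ _) fun _ _ _ => abs_nonneg _
  have hsum := Finset.sum_le_sum hterm
  rw [Finset.sum_neg_distrib, ← Finset.mul_sum] at hsum
  have hsplit := Finset.add_sum_erase _ (fun K : ℕ => τ ^ (-(((M : ℝ) + K) / N)) * x K)
    (Finset.mem_Icc.mpr ⟨le_rfl, hn⟩)
  nlinarith [mul_le_mul_of_nonneg_left hrest hab]

theorem mul_inv_le_sum_rpow_mul (hN : 0 < N) (hL : M + L ≤ N) (hn : L ≤ n) (hτ : 1 ≤ τ)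
    {x : ℕ → ℝ} {c B : ℝ} (hc : 0 < c) (hxL : c ≤ x L) (hxB : ∑ K ∈ Finset.Icc L n, |x K| ≤ B)
    (hsmall : τ ^ (-(1 / (N : ℝ))) * B ≤ c / 2) :
    c / 2 * τ⁻¹ ≤ ∑ K ∈ Finset.Icc L n, τ ^ (-(((M : ℝ) + K) / N)) * x K := by
  have hexp : -1 ≤ -(((M : ℝ) + L) / N) := by
    have hN' : (0 : ℝ) < N := by exact_mod_cast hN
    have hL' : (M : ℝ) + L ≤ N := by exact_mod_cast hL
    rw [neg_le_neg_iff, div_le_one hN']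
    exact hL'
  have hinv : τ⁻¹ ≤ τ ^ (-(((M : ℝ) + L) / N)) := by
    rw [← rpow_neg_one]
    exact rpow_le_rpow_of_exponent_le hτ hexp
  have hb : τ ^ (-(1 / (N : ℝ))) * ∑ K ∈ Finset.Icc L n, |x K| ≤ c / 2 :=
    (mul_le_mul_of_nonneg_left hxB (by positivity)).trans hsmall
  calc c / 2 * τ⁻¹ ≤ τ ^ (-(((M : ℝ) + L) / N)) * (c / 2) := by
        rw [mul_comm]; exact mul_le_mul_of_nonneg_right hinv (by linarith)
    _ ≤ τ ^ (-(((M : ℝ) + L) / N)) * (x L - τ ^ (-(1 / (N : ℝ))) * ∑ K ∈ Finset.Icc L n, |x K|) :=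
        mul_le_mul_of_nonneg_left (by linarith) (by positivity)
    _ ≤ _ := rpow_mul_sub_le_sum_rpow_mul hN hn hτ x

end DominantTerm

theorem statement6_general (N M L n : ℕ) (hN : 1 ≤ N) (hL : M + L ≤ N) (hn : L ≤ n)
    (Λ : ℕ → ℝ → ℝ → ℝ)
    (hΛc : ∀ K, L ≤ K → K ≤ n → Continuous (fun p : ℝ × ℝ => Λ K p.1 p.2))
    (hΛ0 : ∀ ρ φ : ℝ, Λ L ρ φ ≠ 0)
    (τ₁ : ℝ) (ρ φ : ℝ → ℝ)
    (hρ : ∀ τ ≥ τ₁, HasDerivAt ρ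
      (∑ K ∈ Finset.Icc L n, τ ^ (-(((M : ℝ) + (K : ℝ)) / (N : ℝ))) * Λ K (ρ τ) (φ τ)) τ) :
    ∀ D : Set (ℝ × ℝ), Bornology.IsBounded D → ∃ τ₂ ≥ τ₁, (ρ τ₂, φ τ₂) ∉ D := by
  intro D hD
  by_contra! hstay
  obtain ⟨R, hR⟩ := hD.subset_closedBall (0 : ℝ × ℝ)
  have hS : IsCompact (closedBall (0 : ℝ × ℝ) R) := isCompact_closedBall _ _
  obtain ⟨ε, hε, hεΛ⟩ := (hΛc L le_rfl hn).exists_abs_eq_one_mul_pos fun p => hΛ0 p.1 p.2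
  obtain ⟨c, hc, hcΛ⟩ := hS.exists_forall_le'
    (continuous_const.mul (hΛc L le_rfl hn)).continuousOn fun p _ => hεΛ p
  obtain ⟨B, hB⟩ := hS.bddAbove_image (continuous_finsetSum _ fun K hK =>
    (hΛc K (Finset.mem_Icc.mp hK).1 (Finset.mem_Icc.mp hK).2).abs).continuousOn
  have hsmall : ∀ᶠ τ in atTop, τ ^ (-(1 / (N : ℝ))) * B < c / 2 :=
    ((tendsto_rpow_neg_atTop (by positivity)).mul_const B).eventually_lt_const (by simpa using hc)
  obtain ⟨T, hT⟩ := eventually_atTop.1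
    ((hsmall.and (eventually_ge_atTop 1)).and (eventually_ge_atTop τ₁))
  have hgrowth : Tendsto (fun τ => ε * ρ τ) atTop atTop := by
    refine tendsto_atTop_of_mul_inv_le_deriv (zero_lt_one.trans_le (hT T le_rfl).1.2)
      (half_pos hc) (fun τ hτ => (hρ τ (hT τ hτ).2).const_mul ε) fun τ hτ => ?_
    obtain ⟨⟨hBτ, hτ1⟩, hτ₁⟩ := hT τ hτ
    have hp := hR (hstay τ hτ₁)
    rw [Finset.mul_sum]
    simp_rw [mul_left_comm ε]
    exact mul_inv_le_sum_rpow_mul hN hL hn hτ1 hc (hcΛ _ hp)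
      (by simpa [abs_mul, hε] using hB ⟨_, hp, rfl⟩) hBτ.le
  obtain ⟨τ, hτR, hτ₁⟩ := ((hgrowth.eventually_gt_atTop R).and (eventually_ge_atTop τ₁)).exists
  have hp := mem_closedBall_zero_iff.mp (hR (hstay τ hτ₁))
  have hρR : |ε * ρ τ| ≤ R := by
    rw [abs_mul, hε, one_mul, ← Real.norm_eq_abs]
    exact (norm_fst_le (ρ τ, φ τ)).trans hp
  linarith [le_abs_self (ε * ρ τ)]

/-- phase drifting: In the truncated averaged system
`dρ/dτ = Σ_{K=L}^{n} τ^{−(M+K)/N} Λ_K(ρ,φ)`, `dφ/dτ = Σ_{K=0}^{n} τ^{−(M+K)/N} Ω_K(ρ,φ)`,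
with continuous `2π`-periodic-in-`φ` coefficients and a never-vanishing leading
coefficient `Λ_L`, every solution on a half-line `[τ₁,∞)` with `τ₁ > 0` exits every
bounded subset of the plane in finite time. -/
theorem statement6 (N M L n : ℕ) (hN : 1 ≤ N) (hM : 1 ≤ M) (hL : M + L ≤ N) (hn : L ≤ n)
    (Λ Ω : ℕ → ℝ → ℝ → ℝ)
    (hΛc : ∀ K, L ≤ K → K ≤ n → Continuous (fun p : ℝ × ℝ => Λ K p.1 p.2))
    (hΛp : ∀ K, L ≤ K → K ≤ n → ∀ ρ φ : ℝ, Λ K ρ (φ + 2 * π) = Λ K ρ φ)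
    (hΩc : ∀ K ≤ n, Continuous (fun p : ℝ × ℝ => Ω K p.1 p.2))
    (hΩp : ∀ K ≤ n, ∀ ρ φ : ℝ, Ω K ρ (φ + 2 * π) = Ω K ρ φ)
    (hΛ0 : ∀ ρ φ : ℝ, Λ L ρ φ ≠ 0)
    (τ₁ : ℝ) (hτ₁ : 0 < τ₁) (ρ φ : ℝ → ℝ)
    (hρ : ∀ τ ≥ τ₁, HasDerivAt ρ
      (∑ K ∈ Finset.Icc L n, τ ^ (-(((M : ℝ) + (K : ℝ)) / (N : ℝ))) * Λ K (ρ τ) (φ τ)) τ)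
    (hφ : ∀ τ ≥ τ₁, HasDerivAt φ
      (∑ K ∈ Finset.range (n + 1), τ ^ (-(((M : ℝ) + (K : ℝ)) / (N : ℝ))) * Ω K (ρ τ) (φ τ)) τ) :
    ∀ D : Set (ℝ × ℝ), Bornology.IsBounded D → ∃ τ₂ ≥ τ₁, (ρ τ₂, φ τ₂) ∉ D :=
  statement6_general N M L n hN hL hn Λ hΛc hΛ0 τ₁ ρ φ hρ
end

section
/- Let N, M, D, L be integers with N ≥ 1, 1 ≤ M ≤ D, M + D < N and L ≥ 0, and let Δ₁ > 0, ε ∈ (0,1), κ > 0. Suppose V : ℝ² × [τ₁,∞) → ℝ is C¹ and for every τ ≥ τ₁ and every (ρ,φ) with W₀(ρ,φ,τ₁) ≤ Δ₁² one has (1−ε) W₀(ρ,φ,τ) ≤ V(ρ,φ,τ) ≤ (1+ε) W₀(ρ,φ,τ) and 𝒟V(ρ,φ,τ) ≤ −κ τ^{−(M+D)/N} V(ρ,φ,τ). Then there exists δ ∈ (0,Δ₁) such that every solution (ρ(τ),φ(τ)) on [τ₁,∞) with W₀(ρ(τ₁),φ(τ₁),τ₁) ≤ δ² satisfies W₀(ρ(τ),φ(τ),τ₁)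 ≤ Δ₁² for all τ ≥ τ₁ and, moreover, W₀(ρ(τ),φ(τ),τ₁) ≤ ((1+ε)/(1−ε)) δ² τ^{L/N} exp(−(κN/(N−M−D)) (τ^{(N−M−D)/N} − τ₁^{(N−M−D)/N})) for all τ ≥ τ₁; in particular (ρ(τ),φ(τ)) → (0,0) as τ → ∞ (exponential stability of the zero solution). -/
open Real

/-- `W₀(ρ,φ,τ) = (Q ρ² + τ^{−L/N} λ₀ φ²)/2`. -/
noncomputable def W0 (Q lam0 : ℝ) (N L : ℕ) (ρ φ τ : ℝ) : ℝ :=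
  (Q * ρ ^ 2 + τ ^ (-(L : ℝ) / (N : ℝ)) * lam0 * φ ^ 2) / 2

/-- Derivative of `V` along the system `dρ/dτ = τ^{−M/N} A(ρ,φ,τ)`,
`dφ/dτ = τ^{−M/N} B(ρ,φ,τ)`:
`𝒟V = ∂_τV + τ^{−M/N}(A ∂_ρV + B ∂_φV)`. -/
noncomputable def DV (N M : ℕ) (A B V : ℝ → ℝ → ℝ → ℝ) (ρ φ τ : ℝ) : ℝ :=
  deriv (fun t => V ρ φ t) τ +
    τ ^ (-(M : ℝ) / (N : ℝ)) *
      (A ρ φ τ * deriv (fun r => V r φ τ) ρ + B ρ φ τ * deriv (fun p => V ρ p τ) φ)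

/-- A solution on `[τ₁,∞)` of the planar system
`dρ/dτ = τ^{−M/N} A(ρ,φ,τ)`, `dφ/dτ = τ^{−M/N} B(ρ,φ,τ)`. -/
def IsSolution (N M : ℕ) (A B : ℝ → ℝ → ℝ → ℝ) (τ₁ : ℝ) (ρ φ : ℝ → ℝ) : Prop :=
  ∀ τ ≥ τ₁, HasDerivAt ρ (τ ^ (-(M : ℝ) / (N : ℝ)) * A (ρ τ) (φ τ) τ) τ ∧
    HasDerivAt φ (τ ^ (-(M : ℝ) / (N : ℝ)) * B (ρ τ) (φ τ) τ) τ

/-!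
Along a solution, `V` obeys `dV/dτ ≤ -κ τ^(α-1) V` with `α = (N-M-D)/N` for as long as the
trajectory stays in the region `W₀(·,·,τ₁) ≤ Δ₁²`, and the integrating factor
`exp((κ/α)(τ^α - τ₁^α))` turns this into decay of `V`. The sandwich `(1 ± ε) W₀` and the
comparison `W₀(·,·,τ₁) ≤ τ^(L/N) W₀(·,·,τ)` carry the decay over to `W₀(·,·,τ₁)`, with the envelope
`τ^(L/N) exp(-(κ/α)(τ^α - τ₁^α))`, which is bounded on `[τ₁, ∞)` and tends to `0`. Choosing `δ`
small against the bound of the envelope keeps the estimate strictly inside the region, so by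
continuity the trajectory can never leave it.
-/

open Filter Set Topology

lemma hasDerivAt_comp_curve {V : ℝ → ℝ → ℝ → ℝ} {ρ φ : ℝ → ℝ} {a b τ : ℝ}
    (hV : DifferentiableAt ℝ (fun p : ℝ × ℝ × ℝ => V p.1 p.2.1 p.2.2) (ρ τ, φ τ, τ))
    (hρ : HasDerivAt ρ a τ) (hφ : HasDerivAt φ b τ) :
    HasDerivAt (fun t => V (ρ t) (φ t) t)
      (a * deriv (fun r => V r (φ τ) τ) (ρ τ) + b * deriv (fun p => V (ρ τ) p τ) (φ τ)
        + deriv (fun t => V (ρ τ) (φ τ) t) τ) τ := by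
  set f := fderiv ℝ (fun p : ℝ × ℝ × ℝ => V p.1 p.2.1 p.2.2) (ρ τ, φ τ, τ)
  have hF := hV.hasFDerivAt
  have hρ' : HasDerivAt (fun r => V r (φ τ) τ) (f (1, 0, 0)) (ρ τ) :=
    hF.comp_hasDerivAt (f := fun r => (r, φ τ, τ)) _
      ((hasDerivAt_id _).prodMk ((hasDerivAt_const _ _).prodMk (hasDerivAt_const _ _)))
  have hφ' : HasDerivAt (fun p => V (ρ τ) p τ) (f (0, 1, 0)) (φ τ) :=
    hF.comp_hasDerivAt (f := fun p => (ρ τ, p, τ)) _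
      ((hasDerivAt_const _ _).prodMk ((hasDerivAt_id _).prodMk (hasDerivAt_const _ _)))
  have hτ' : HasDerivAt (fun t => V (ρ τ) (φ τ) t) (f (0, 0, 1)) τ :=
    hF.comp_hasDerivAt (f := fun t => (ρ τ, φ τ, t)) _
      ((hasDerivAt_const _ _).prodMk ((hasDerivAt_const _ _).prodMk (hasDerivAt_id _)))
  have hlin : f (a, b, 1) = a * f (1, 0, 0) + b * f (0, 1, 0) + f (0, 0, 1) := by
    have : ((a, b, 1) : ℝ × ℝ × ℝ) = a • (1, 0, 0) + b • (0, 1, 0) + (0, 0, 1) := by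
      simp
    rw [this, map_add, map_add, map_smul, map_smul, smul_eq_mul, smul_eq_mul]
  rw [hρ'.deriv, hφ'.deriv, hτ'.deriv, ← hlin]
  exact hF.comp_hasDerivAt τ (hρ.prodMk (hφ.prodMk (hasDerivAt_id τ)))

lemma IsSolution.hasDerivAt_comp {N M : ℕ} {A B V : ℝ → ℝ → ℝ → ℝ} {τ₁ : ℝ} {ρ φ : ℝ → ℝ}
    (hsol : IsSolution N M A B τ₁ ρ φ)
    (hV : Differentiable ℝ fun p : ℝ × ℝ × ℝ => V p.1 p.2.1 p.2.2) {τ : ℝ} (hτ : τ₁ ≤ τ) :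
    HasDerivAt (fun t => V (ρ t) (φ t) t) (DV N M A B V (ρ τ) (φ τ) τ) τ := by
  convert hasDerivAt_comp_curve (hV _) (hsol τ hτ).1 (hsol τ hτ).2 using 1
  unfold DV
  ring

lemma IsSolution.continuousAt_W0 {Q lam0 : ℝ} {N M L : ℕ} {A B : ℝ → ℝ → ℝ → ℝ}
    {τ₁ s x : ℝ} {ρ φ : ℝ → ℝ} (hsol : IsSolution N M A B τ₁ ρ φ) (hx : τ₁ ≤ x) :
    ContinuousAt (fun τ => W0 Q lam0 N L (ρ τ) (φ τ) s) x := by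
  have := (hsol x hx).1.continuousAt
  have := (hsol x hx).2.continuousAt
  unfold W0
  fun_prop

lemma le_mul_exp_of_hasDerivAt_le {g g' : ℝ → ℝ} {a b κ α : ℝ} (ha : 0 < a) (hα : α ≠ 0)
    (hg : ∀ x ∈ Icc a b, HasDerivAt g (g' x) x)
    (hg' : ∀ x ∈ Ioo a b, g' x ≤ -κ * x ^ (α - 1) * g x) {τ : ℝ} (hτ : τ ∈ Icc a b) :
    g τ ≤ g a * exp (-(κ / α) * (τ ^ α - a ^ α)) := by
  set E : ℝ → ℝ := fun x => exp (κ / α * (x ^ α - a ^ α))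
  have hE : ∀ x ∈ Icc a b, HasDerivAt E (κ * x ^ (α - 1) * E x) x := fun x hx => by
    convert (((hasDerivAt_rpow_const (Or.inl (ha.trans_le hx.1).ne')).sub_const
      (a ^ α)).const_mul (κ / α)).exp using 1
    simp only [E]
    field_simp
  -- `E` is an integrating factor: `(g E)' = (g' + κ x^(α-1) g) E ≤ 0`.
  have hanti : AntitoneOn (fun x => g x * E x) (Icc a b) := by
    refine antitoneOn_of_hasDerivWithinAt_nonpos (convex_Icc a b)
      (f' := fun x => g' x * E x + g x * (κ * x ^ (α - 1) * E x))
      (fun x hx => ((hg x hx).mul (hE x hx)).continuousAt.continuousWithinAt)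
      (fun x hx => ?_) (fun x hx => ?_)
    · rw [interior_Icc] at hx ⊢
      exact ((hg x (Ioo_subset_Icc_self hx)).mul (hE x (Ioo_subset_Icc_self hx))).hasDerivWithinAt
    · rw [interior_Icc] at hx
      have hEx : 0 < E x := exp_pos _
      nlinarith [hg' x hx]
  have hgE : g τ * E τ ≤ g a := by
    simpa [E] using hanti (left_mem_Icc.2 (hτ.1.trans hτ.2)) hτ hτ.1
  have hEinv : exp (-(κ / α) * (τ ^ α - a ^ α)) = (E τ)⁻¹ := by
    rw [← exp_neg]; ring_nf
  rw [hEinv, ← div_eq_mul_inv, le_div_iff₀ (exp_pos _)]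
  exact hgE

lemma W0_nonneg {Q lam0 : ℝ} {N L : ℕ} (hQ : 0 ≤ Q) (hlam0 : 0 ≤ lam0) (ρ φ : ℝ) {τ : ℝ}
    (hτ : 0 ≤ τ) : 0 ≤ W0 Q lam0 N L ρ φ τ := by
  unfold W0
  have := rpow_nonneg hτ (-(L : ℝ) / N)
  positivity

lemma W0_le_rpow_mul_W0 {Q lam0 : ℝ} {N L : ℕ} (hQ : 0 ≤ Q) (hlam0 : 0 ≤ lam0) (ρ φ : ℝ)
    {τ₁ τ : ℝ} (hτ₁ : 1 ≤ τ₁) (hτ : τ₁ ≤ τ) :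
    W0 Q lam0 N L ρ φ τ₁ ≤ τ ^ ((L : ℝ) / N) * W0 Q lam0 N L ρ φ τ := by
  have hτ0 : 0 < τ := by linarith
  have hgrow : 1 ≤ τ ^ ((L : ℝ) / N) := one_le_rpow (hτ₁.trans hτ) (by positivity)
  have hdecr : τ₁ ^ (-(L : ℝ) / N) ≤ 1 :=
    rpow_le_one_of_one_le_of_nonpos hτ₁ (by rw [neg_div]; exact neg_nonpos.2 (by positivity))
  have hcancel : τ ^ ((L : ℝ) / N) * τ ^ (-(L : ℝ) / N) = 1 := by
    rw [← rpow_add hτ0, neg_div, add_neg_cancel, rpow_zero]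
  have hexpand : τ ^ ((L : ℝ) / N) * W0 Q lam0 N L ρ φ τ
      = (τ ^ ((L : ℝ) / N) * (Q * ρ ^ 2) + lam0 * φ ^ 2) / 2 := by
    unfold W0
    linear_combination (lam0 * φ ^ 2 / 2) * hcancel
  rw [hexpand, W0]
  nlinarith [mul_nonneg (sub_nonneg.2 hgrow) (mul_nonneg hQ (sq_nonneg ρ)),
    mul_nonneg (sub_nonneg.2 hdecr) (mul_nonneg hlam0 (sq_nonneg φ))]

lemma W0_le_of_lyapunov {Q lam0 : ℝ} {N M L : ℕ} {τ₁ : ℝ} {A B V : ℝ → ℝ → ℝ → ℝ}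
    {Δ₁ ε κ α r b : ℝ} {ρ φ : ℝ → ℝ} (hQ : 0 ≤ Q) (hlam0 : 0 ≤ lam0) (hτ₁ : 1 ≤ τ₁)
    (hε₀ : 0 ≤ ε) (hε₁ : ε < 1) (hα : α ≠ 0)
    (hV : Differentiable ℝ fun p : ℝ × ℝ × ℝ => V p.1 p.2.1 p.2.2)
    (hsand : ∀ τ ≥ τ₁, ∀ ρ φ : ℝ, W0 Q lam0 N L ρ φ τ₁ ≤ Δ₁ ^ 2 →
      (1 - ε) * W0 Q lam0 N L ρ φ τ ≤ V ρ φ τ ∧ V ρ φ τ ≤ (1 + ε) * W0 Q lam0 N L ρ φ τ)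
    (hdecay : ∀ τ ≥ τ₁, ∀ ρ φ : ℝ, W0 Q lam0 N L ρ φ τ₁ ≤ Δ₁ ^ 2 →
      DV N M A B V ρ φ τ ≤ -κ * τ ^ (α - 1) * V ρ φ τ)
    (hsol : IsSolution N M A B τ₁ ρ φ) (hinit : W0 Q lam0 N L (ρ τ₁) (φ τ₁) τ₁ ≤ r)
    (hb : τ₁ ≤ b) (hreg : ∀ s ∈ Icc τ₁ b, W0 Q lam0 N L (ρ s) (φ s) τ₁ ≤ Δ₁ ^ 2) :
    W0 Q lam0 N L (ρ b) (φ b) τ₁ ≤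
      (1 + ε) / (1 - ε) * r * (b ^ ((L : ℝ) / N) * exp (-(κ / α) * (b ^ α - τ₁ ^ α))) := by
  set g : ℝ → ℝ := fun t => V (ρ t) (φ t) t
  have hgb : g b ≤ g τ₁ * exp (-(κ / α) * (b ^ α - τ₁ ^ α)) :=
    le_mul_exp_of_hasDerivAt_le (by linarith) hα (fun x hx => hsol.hasDerivAt_comp hV hx.1)
      (fun x hx => hdecay x hx.1.le _ _ (hreg x (Ioo_subset_Icc_self hx))) (right_mem_Icc.2 hb)
  have hgτ₁ : g τ₁ ≤ (1 + ε) * r :=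
    (hsand τ₁ le_rfl _ _ (hreg τ₁ (left_mem_Icc.2 hb))).2.trans (by gcongr)
  have hW0b : (1 - ε) * W0 Q lam0 N L (ρ b) (φ b) b ≤ g b :=
    (hsand b hb _ _ (hreg b (right_mem_Icc.2 hb))).1
  have hpow : 0 ≤ b ^ ((L : ℝ) / N) := rpow_nonneg (by linarith) _
  have h1ε : 0 < 1 - ε := by linarith
  calc W0 Q lam0 N L (ρ b) (φ b) τ₁ ≤ b ^ ((L : ℝ) / N) * W0 Q lam0 N L (ρ b) (φ b) b :=
        W0_le_rpow_mul_W0 hQ hlam0 _ _ hτ₁ hb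
    _ ≤ b ^ ((L : ℝ) / N) * ((1 + ε) * r * exp (-(κ / α) * (b ^ α - τ₁ ^ α)) / (1 - ε)) := by
        refine mul_le_mul_of_nonneg_left ((le_div_iff₀ h1ε).2 ?_) hpow
        nlinarith [exp_pos (-(κ / α) * (b ^ α - τ₁ ^ α))]
    _ = _ := by ring

lemma tendsto_rpow_mul_exp_neg_mul_rpow_sub (p t₁ : ℝ) {c α : ℝ} (hc : 0 < c) (hα : 0 < α) :
    Tendsto (fun τ => τ ^ p * exp (-c * (τ ^ α - t₁ ^ α))) atTop (𝓝 0) := by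
  have h := ((tendsto_rpow_mul_exp_neg_mul_atTop_nhds_zero (p / α) c hc).comp
    (tendsto_rpow_atTop hα)).mul_const (exp (c * t₁ ^ α))
  rw [zero_mul] at h
  refine h.congr' ?_
  filter_upwards [eventually_ge_atTop 0] with τ hτ
  have hp : α * (p / α) = p := by field_simp
  simp only [Function.comp_apply, mul_assoc, ← exp_add, ← rpow_mul hτ, hp]
  ring_nf

lemma ContinuousOn.bddAbove_image_Ici_of_tendsto {f : ℝ → ℝ} {a l : ℝ}
    (hf : ContinuousOn f (Ici a)) (hlim : Tendsto f atTop (𝓝 l)) : BddAbove (f '' Ici a) := by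
  obtain ⟨T, hT⟩ := eventually_atTop.1 (hlim.eventually (gt_mem_nhds (lt_add_one l)))
  obtain ⟨C, hC⟩ :=
    (isCompact_Icc (a := a) (b := max a T)).bddAbove_image (hf.mono fun _ hx => hx.1)
  refine ⟨max C (l + 1), ?_⟩
  rintro _ ⟨x, hx, rfl⟩
  rcases le_total x (max a T) with h | h
  · exact (hC ⟨x, ⟨hx, h⟩, rfl⟩).trans (le_max_left _ _)
  · exact (hT x (le_of_max_le_right h)).le.trans (le_max_right _ _)

lemma forall_le_of_trapped {W : ℝ → ℝ} {a K K' : ℝ} (hK : K' < K)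
    (hW : ∀ x ≥ a, ContinuousAt W x) (ha : W a ≤ K)
    (htrap : ∀ b ≥ a, (∀ s ∈ Icc a b, W s ≤ K) → W b ≤ K') : ∀ τ ≥ a, W τ ≤ K' := by
  suffices h : ∀ τ ≥ a, W τ ≤ K from fun τ hτ => htrap τ hτ fun s hs => h s hs.1
  by_contra! hexit
  set S := {t | a ≤ t ∧ K < W t}
  have hS : S.Nonempty := hexit
  have hbdd : BddBelow S := ⟨a, fun _ hx => hx.1⟩
  -- `t` is the first exit time: `W ≤ K'` before it, hence `W t < K`, and `W < K` a little beyond.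
  set t := sInf S
  have hat : a ≤ t := le_csInf hS fun _ hx => hx.1
  have hbefore : ∀ s ∈ Ico a t, W s ≤ K' := fun s hs =>
    htrap s hs.1 fun u hu => not_lt.1 fun hWu =>
      (csInf_le hbdd ⟨hu.1, hWu⟩).not_gt (hu.2.trans_lt hs.2)
  have hWt : W t < K := by
    refine lt_of_le_of_lt ?_ hK
    rcases hat.eq_or_lt with hta | hlt
    · rw [← hta]
      exact htrap a le_rfl fun s hs => by rwa [le_antisymm hs.2 hs.1]
    · refine (hW t hat).continuousWithinAt.closure_le ?_ continuousWithinAt_const hbefore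
      rw [closure_Ico hlt.ne]
      exact right_mem_Icc.2 hlt.le
  obtain ⟨u, htu, hu⟩ := exists_Ico_subset_of_mem_nhds
    ((hW t hat).eventually (gt_mem_nhds hWt)) (exists_gt t)
  have hut : u ≤ t := le_csInf hS fun s hs =>
    not_lt.1 fun hsu => (hs.2.trans (hu ⟨csInf_le hbdd hs, hsu⟩)).false
  exact htu.not_ge hut

lemma exists_radius_of_trapping {F : ℝ → ℝ} {a Δ C : ℝ} (hΔ : 0 < Δ) (hC : 0 ≤ C)
    (hF : BddAbove (F '' Ici a)) :
    ∃ δ : ℝ, 0 < δ ∧ δ < Δ ∧ ∀ W : ℝ → ℝ, (∀ x ≥ a, ContinuousAt W x) → W a ≤ δ ^ 2 →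
      (∀ b ≥ a, (∀ s ∈ Icc a b, W s ≤ Δ ^ 2) → W b ≤ C * δ ^ 2 * F b) →
      ∀ τ ≥ a, W τ ≤ Δ ^ 2 ∧ W τ ≤ C * δ ^ 2 * F τ := by
  obtain ⟨S, hS⟩ := hF
  set m := max (C * S) 1
  have hm : 1 ≤ m := le_max_right _ _
  have hδΔ : Δ / (2 * m) < Δ := div_lt_self hΔ (by linarith)
  refine ⟨Δ / (2 * m), by positivity, hδΔ, fun W hW hWa htrap => ?_⟩
  have hK : C * (Δ / (2 * m)) ^ 2 * S < Δ ^ 2 := by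
    calc C * (Δ / (2 * m)) ^ 2 * S ≤ m * (Δ / (2 * m)) ^ 2 := by
          rw [mul_right_comm]; gcongr; exact le_max_left _ _
      _ = Δ ^ 2 / (4 * m) := by field_simp; ring
      _ < Δ ^ 2 := div_lt_self (by positivity) (by linarith)
  have hstay := forall_le_of_trapped hK hW (hWa.trans (by gcongr)) fun b hb hreg =>
    (htrap b hb hreg).trans (mul_le_mul_of_nonneg_left (hS ⟨b, hb, rfl⟩) (by positivity))
  exact fun τ hτ =>
    ⟨(hstay τ hτ).trans hK.le, htrap τ hτ fun s hs => (hstay s hs.1).trans hK.le⟩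

lemma tendsto_zero_of_sq_le {ι : Type*} {l : Filter ι} {f g : ι → ℝ}
    (hfg : ∀ i, f i ^ 2 ≤ g i) (hg : Tendsto g l (𝓝 0)) : Tendsto f l (𝓝 0) :=
  squeeze_zero_norm (fun i => (abs_le_sqrt (hfg i))) (by simpa using hg.sqrt)

lemma tendsto_zero_of_tendsto_W0 {ι : Type*} {l : Filter ι} {Q lam0 τ₁ : ℝ} {N L : ℕ}
    {ρ φ : ι → ℝ} (hQ : 0 < Q) (hlam0 : 0 < lam0) (hτ₁ : 0 < τ₁)
    (hW : Tendsto (fun i => W0 Q lam0 N L (ρ i) (φ i) τ₁) l (𝓝 0)) :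
    Tendsto (fun i => (ρ i, φ i)) l (𝓝 (0, 0)) := by
  have hw : 0 < τ₁ ^ (-(L : ℝ) / N) * lam0 := by positivity
  refine (tendsto_zero_of_sq_le (fun i => ?_) (by simpa using hW.const_mul (2 / Q))).prodMk_nhds
    (tendsto_zero_of_sq_le (fun i => ?_)
      (by simpa using hW.const_mul (2 / (τ₁ ^ (-(L : ℝ) / N) * lam0))))
  · rw [W0, div_mul_div_comm, le_div_iff₀ (by positivity)]
    nlinarith [mul_nonneg hw.le (sq_nonneg (φ i))]
  · rw [W0, div_mul_div_comm, le_div_iff₀ (by positivity)]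
    nlinarith [mul_nonneg hQ.le (sq_nonneg (ρ i))]

theorem statement8_general (Q lam0 : ℝ) (hQ : 0 < Q) (hlam0 : 0 < lam0)
    (N M D L : ℕ) (hMDN : M + D < N)
    (τ₁ : ℝ) (hτ₁ : 1 ≤ τ₁)
    (A B : ℝ → ℝ → ℝ → ℝ)
    (Δ₁ ε κ : ℝ) (hΔ₁ : 0 < Δ₁) (hε : ε ∈ Set.Ioo (0 : ℝ) 1) (hκ : 0 < κ)
    (V : ℝ → ℝ → ℝ → ℝ)
    (hV : ContDiff ℝ 1 fun p : ℝ × ℝ × ℝ => V p.1 p.2.1 p.2.2)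
    (hsand : ∀ τ ≥ τ₁, ∀ ρ φ : ℝ, W0 Q lam0 N L ρ φ τ₁ ≤ Δ₁ ^ 2 →
      (1 - ε) * W0 Q lam0 N L ρ φ τ ≤ V ρ φ τ ∧ V ρ φ τ ≤ (1 + ε) * W0 Q lam0 N L ρ φ τ)
    (hdecay : ∀ τ ≥ τ₁, ∀ ρ φ : ℝ, W0 Q lam0 N L ρ φ τ₁ ≤ Δ₁ ^ 2 →
      DV N M A B V ρ φ τ ≤ -κ * τ ^ (-((M : ℝ) + (D : ℝ)) / (N : ℝ)) * V ρ φ τ) :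
    ∃ δ : ℝ, 0 < δ ∧ δ < Δ₁ ∧
      ∀ ρ φ : ℝ → ℝ, IsSolution N M A B τ₁ ρ φ →
        W0 Q lam0 N L (ρ τ₁) (φ τ₁) τ₁ ≤ δ ^ 2 →
        (∀ τ ≥ τ₁, W0 Q lam0 N L (ρ τ) (φ τ) τ₁ ≤ Δ₁ ^ 2) ∧
        (∀ τ ≥ τ₁, W0 Q lam0 N L (ρ τ) (φ τ) τ₁ ≤
          ((1 + ε) / (1 - ε)) * δ ^ 2 * τ ^ ((L : ℝ) / (N : ℝ)) *
            Real.exp (-(κ * (N : ℝ) / ((N : ℝ) - (M : ℝ) - (D : ℝ))) *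
              (τ ^ (((N : ℝ) - (M : ℝ) - (D : ℝ)) / (N : ℝ)) -
                τ₁ ^ (((N : ℝ) - (M : ℝ) - (D : ℝ)) / (N : ℝ))))) ∧
        Filter.Tendsto (fun τ => (ρ τ, φ τ)) Filter.atTop (nhds (0, 0)) := by
  obtain ⟨hε₀, hε₁⟩ := hε
  have hN : (0 : ℝ) < N := by exact_mod_cast (by omega : 0 < N)
  have hMDN' : (M : ℝ) + D < N := by exact_mod_cast hMDN
  set α : ℝ := ((N : ℝ) - M - D) / N
  have hα : 0 < α := div_pos (by linarith) hN
  have hκα : κ / α = κ * N / (N - M - D) := div_div_eq_mul_div _ _ _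
  have hα1 : α - 1 = -((M : ℝ) + D) / N := by
    simp only [α]
    field_simp
    ring
  have hdecay' : ∀ τ ≥ τ₁, ∀ ρ φ : ℝ, W0 Q lam0 N L ρ φ τ₁ ≤ Δ₁ ^ 2 →
      DV N M A B V ρ φ τ ≤ -κ * τ ^ (α - 1) * V ρ φ τ := by
    rwa [hα1]
  set F : ℝ → ℝ := fun τ => τ ^ ((L : ℝ) / N) * exp (-(κ / α) * (τ ^ α - τ₁ ^ α))
  have hFlim : Tendsto F atTop (𝓝 0) :=
    tendsto_rpow_mul_exp_neg_mul_rpow_sub _ _ (div_pos hκ hα) hα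
  have hFcont : Continuous F := by fun_prop (disch := positivity)
  obtain ⟨δ, hδ, hδΔ, hstable⟩ := exists_radius_of_trapping hΔ₁
    (div_pos (by linarith) (by linarith) : 0 < (1 + ε) / (1 - ε)).le
    (hFcont.continuousOn.bddAbove_image_Ici_of_tendsto hFlim)
  refine ⟨δ, hδ, hδΔ, fun ρ φ hsol hinit => ?_⟩
  have hW := hstable (fun τ => W0 Q lam0 N L (ρ τ) (φ τ) τ₁)
    (fun _ hx => hsol.continuousAt_W0 hx) hinit fun b hb hreg => W0_le_of_lyapunov hQ.le hlam0.le hτ₁ hε₀.le hε₁ hα.ne'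
      (hV.differentiable one_ne_zero) hsand hdecay' hsol hinit hb hreg
  refine ⟨fun τ hτ => (hW τ hτ).1, fun τ hτ => ?_, ?_⟩
  · simpa only [F, mul_assoc, hκα] using (hW τ hτ).2
  · refine tendsto_zero_of_tendsto_W0 (N := N) (L := L) hQ hlam0 (zero_lt_one.trans_le hτ₁) ?_
    refine squeeze_zero' ?_ ?_ (by simpa using hFlim.const_mul ((1 + ε) / (1 - ε) * δ ^ 2))
    · filter_upwards with τ using W0_nonneg hQ.le hlam0.le _ _ (by linarith)
    · filter_upwards [eventually_ge_atTop τ₁] with τ hτ using (hW τ hτ).2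

/-- exponential stability, case `γ_D < 0`, `M + D < N`: If the Lyapunov
function `V` is sandwiched between `(1±ε) W₀` and satisfies
`𝒟V ≤ −κ τ^{−(M+D)/N} V` on the region `{W₀(·,·,τ₁) ≤ Δ₁²}`, then there is `δ ∈ (0,Δ₁)`
such that every solution starting with `W₀ ≤ δ²` stays in the region and obeys the
exponential bound
`W₀(ρ(τ),φ(τ),τ₁) ≤ ((1+ε)/(1−ε)) δ² τ^{L/N} exp(−(κN/(N−M−D))(τ^{(N−M−D)/N} − τ₁^{(N−M−D)/N}))`;
in particular `(ρ(τ),φ(τ)) → (0,0)`. -/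
theorem statement8 (Q lam0 : ℝ) (hQ : 0 < Q) (hlam0 : 0 < lam0)
    (N M D L : ℕ) (hN : 1 ≤ N) (hM : 1 ≤ M) (hMD : M ≤ D) (hMDN : M + D < N)
    (τ₁ : ℝ) (hτ₁ : 1 ≤ τ₁)
    (A B : ℝ → ℝ → ℝ → ℝ)
    (hA : Continuous fun p : ℝ × ℝ × ℝ => A p.1 p.2.1 p.2.2)
    (hB : Continuous fun p : ℝ × ℝ × ℝ => B p.1 p.2.1 p.2.2)
    (hA0 : ∀ τ ≥ τ₁, A 0 0 τ = 0) (hB0 : ∀ τ ≥ τ₁, B 0 0 τ = 0)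
    (Δ₁ ε κ : ℝ) (hΔ₁ : 0 < Δ₁) (hε : ε ∈ Set.Ioo (0 : ℝ) 1) (hκ : 0 < κ)
    (V : ℝ → ℝ → ℝ → ℝ)
    (hV : ContDiff ℝ 1 fun p : ℝ × ℝ × ℝ => V p.1 p.2.1 p.2.2)
    (hsand : ∀ τ ≥ τ₁, ∀ ρ φ : ℝ, W0 Q lam0 N L ρ φ τ₁ ≤ Δ₁ ^ 2 →
      (1 - ε) * W0 Q lam0 N L ρ φ τ ≤ V ρ φ τ ∧ V ρ φ τ ≤ (1 + ε) * W0 Q lam0 N L ρ φ τ)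
    (hdecay : ∀ τ ≥ τ₁, ∀ ρ φ : ℝ, W0 Q lam0 N L ρ φ τ₁ ≤ Δ₁ ^ 2 →
      DV N M A B V ρ φ τ ≤ -κ * τ ^ (-((M : ℝ) + (D : ℝ)) / (N : ℝ)) * V ρ φ τ) :
    ∃ δ : ℝ, 0 < δ ∧ δ < Δ₁ ∧
      ∀ ρ φ : ℝ → ℝ, IsSolution N M A B τ₁ ρ φ →
        W0 Q lam0 N L (ρ τ₁) (φ τ₁) τ₁ ≤ δ ^ 2 →
        (∀ τ ≥ τ₁, W0 Q lam0 N L (ρ τ) (φ τ) τ₁ ≤ Δ₁ ^ 2) ∧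
        (∀ τ ≥ τ₁, W0 Q lam0 N L (ρ τ) (φ τ) τ₁ ≤
          ((1 + ε) / (1 - ε)) * δ ^ 2 * τ ^ ((L : ℝ) / (N : ℝ)) *
            Real.exp (-(κ * (N : ℝ) / ((N : ℝ) - (M : ℝ) - (D : ℝ))) *
              (τ ^ (((N : ℝ) - (M : ℝ) - (D : ℝ)) / (N : ℝ)) -
                τ₁ ^ (((N : ℝ) - (M : ℝ) - (D : ℝ)) / (N : ℝ))))) ∧
        Filter.Tendsto (fun τ => (ρ τ, φ τ)) Filter.atTop (nhds (0, 0)) :=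
  statement8_general Q lam0 hQ hlam0 N M D L hMDN τ₁ hτ₁ A B Δ₁ ε κ hΔ₁ hε hκ V hV hsand hdecay
end
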